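/- Let (f, ζ) ∈ 𝕋, i.e., f, ζ ∈ C[0,1], ζ(0)=ζ(1)=0, ζ ≥ 0, f(0)=f(1)=0, and for all 0 ≤ s ≤ s' ≤ 1, ζ(s)=ζ(s')=ζ̌(s,s') implies f(s)=f(s'). For θ ∈ [0,1), define f^[θ](x) = f(θ⊕x) - f(θ) and ζ^(θ)(x) = ζ(θ⊕x) + ζ(θ) - 2ζ̌(θ⊕x, θ), where ⊕ is addition modulo 1. Then (f^[θ], ζ^(θ)) ∈ 𝕋. -/

import Mathlib

/-!
`ζ^(θ)(x)` is the distance `treeDist ζ θ (θ ⊕ x)` between `θ` and `θ ⊕ x` in the real tree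
coded by `ζ`, so it is continuous, nonnegative, and vanishes at `x = 0, 1`, where `θ ⊕ x = θ`.
For the snake property, if `ζ^(θ)` is minimal on `[s, s']` at both endpoints, then `θ ⊕ s` and
`θ ⊕ s'` are at tree distance `0`, and the snake property of `(f, ζ)` applies to them. The key
observation: if `t ↦ treeDist ζ θ t` on the arc from `a` to `b` is smallest at `a`, and the arc
descends below the branch point `ζ̌(a, θ)` of `a` and `θ`, then `ζ a = ζ̌(a, θ)`; otherwise the
first vertex of the arc at height `ζ̌(a, θ)` would be closer to `θ` than `a`.
-/

open Set

/-- Addition modulo 1, for `a = θ + x` with `θ ∈ [0,1)` and `x ∈ [0,1]`. -/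
noncomputable def wrap (a : ℝ) : ℝ := if a < 1 then a else a - 1

/-- `ζ̌(x,y) = min{ζ(u) : u ∈ [x∧y, x∨y]}`. -/
noncomputable def snakeMinOn (ζ : ℝ → ℝ) (x y : ℝ) : ℝ := sInf (ζ '' Set.uIcc x y)

/-- The space `𝕋` of snake tours: `ζ` is a continuous nonnegative excursion on `[0,1]`,
`f` is continuous with `f(0)=f(1)=0`, and `f` satisfies the snake property relative to
`ζ`. -/
def MemSnakeSpace (f ζ : ℝ → ℝ) : Prop :=
  ContinuousOn f (Set.Icc 0 1) ∧ ContinuousOn ζ (Set.Icc 0 1) ∧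
  ζ 0 = 0 ∧ ζ 1 = 0 ∧ (∀ x ∈ Set.Icc (0:ℝ) 1, 0 ≤ ζ x) ∧
  f 0 = 0 ∧ f 1 = 0 ∧
  ∀ s ∈ Set.Icc (0:ℝ) 1, ∀ s' ∈ Set.Icc (0:ℝ) 1,
    ζ s = ζ s' → ζ s = snakeMinOn ζ s s' → f s = f s'

/-- The rerooted label function `f^[θ](x) = f(θ⊕x) - f(θ)`. -/
noncomputable def rerootF (f : ℝ → ℝ) (θ : ℝ) : ℝ → ℝ :=
  fun x => f (wrap (θ + x)) - f θ

/-- The rerooted excursion `ζ^(θ)(x) = ζ(θ⊕x) + ζ(θ) - 2ζ̌(θ⊕x, θ)`. -/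
noncomputable def rerootZ (ζ : ℝ → ℝ) (θ : ℝ) : ℝ → ℝ :=
  fun x => ζ (wrap (θ + x)) + ζ θ - 2 * snakeMinOn ζ (wrap (θ + x)) θ

section snakeMinOn

variable {ζ : ℝ → ℝ} {a b c x y z L : ℝ}

lemma snakeMinOn_self : snakeMinOn ζ x x = ζ x := by
  simp [snakeMinOn]

lemma snakeMinOn_comm : snakeMinOn ζ x y = snakeMinOn ζ y x := by
  rw [snakeMinOn, snakeMinOn, uIcc_comm]

lemma snakeMinOn_le (hζ : ContinuousOn ζ (uIcc x y)) (hz : z ∈ uIcc x y) :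
    snakeMinOn ζ x y ≤ ζ z :=
  csInf_le (isCompact_uIcc.image_of_continuousOn hζ).bddBelow (mem_image_of_mem ζ hz)

lemma le_snakeMinOn (h : ∀ z ∈ uIcc x y, c ≤ ζ z) : c ≤ snakeMinOn ζ x y :=
  le_csInf (nonempty_uIcc.image ζ) (forall_mem_image.2 h)

lemma snakeMinOn_le_of_subset (hζ : ContinuousOn ζ (uIcc x y)) (h : uIcc a b ⊆ uIcc x y) :
    snakeMinOn ζ x y ≤ snakeMinOn ζ a b :=
  le_snakeMinOn fun _ hz => snakeMinOn_le hζ (h hz)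

lemma exists_eq_snakeMinOn (hζ : ContinuousOn ζ (uIcc x y)) :
    ∃ z ∈ uIcc x y, ζ z = snakeMinOn ζ x y :=
  (isCompact_uIcc.image_of_continuousOn hζ).sInf_mem (nonempty_uIcc.image ζ)

lemma snakeMinOn_eq_min (hζ : ContinuousOn ζ (uIcc x z)) (hy : y ∈ uIcc x z) :
    snakeMinOn ζ x z = min (snakeMinOn ζ x y) (snakeMinOn ζ y z) := by
  have hxy : uIcc x y ⊆ uIcc x z := uIcc_subset_uIcc_left hy
  have hyz : uIcc y z ⊆ uIcc x z := uIcc_subset_uIcc_right hy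
  refine le_antisymm (le_min (snakeMinOn_le_of_subset hζ hxy) (snakeMinOn_le_of_subset hζ hyz)) ?_
  refine le_snakeMinOn fun v hv => ?_
  rcases uIcc_subset_uIcc_union_uIcc hv with hv | hv
  · exact (min_le_left _ _).trans (snakeMinOn_le (hζ.mono hxy) hv)
  · exact (min_le_right _ _).trans (snakeMinOn_le (hζ.mono hyz) hv)

lemma continuous_snakeMinOn_left (hζ : Continuous ζ) (y : ℝ) :
    Continuous fun x => snakeMinOn ζ x y := by
  have h : ∀ x, snakeMinOn ζ x y = sInf ((fun s : ℝ => ζ (y + s • (x - y))) '' Icc 0 1) := by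
    intro x
    rw [snakeMinOn, uIcc_comm, ← segment_eq_uIcc, segment_eq_image', image_image]
  simp_rw [h]
  exact isCompact_Icc.continuous_sInf (by fun_prop)

lemma continuousOn_snakeMinOn_left (hζ : ContinuousOn ζ (Icc a b)) (hy : y ∈ Icc a b) :
    ContinuousOn (fun x => snakeMinOn ζ x y) (Icc a b) := by
  set g := IccExtend (hy.1.trans hy.2) ((Icc a b).domRestrict ζ)
  have hg : Continuous g := continuous_IccExtend_iff.2 hζ.domRestrict
  refine (continuous_snakeMinOn_left hg y).continuousOn.congr fun x hx => ?_
  have hgζ : EqOn g ζ (uIcc x y) := fun z hz => IccExtend_of_mem _ _ (uIcc_subset_Icc hx hy hz)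
  simp only [snakeMinOn, hgζ.image_eq]

lemma exists_mem_uIcc_snakeMinOn_eq (hζ : ContinuousOn ζ (uIcc a b))
    (hL : snakeMinOn ζ a b ≤ L) (hLa : L ≤ ζ a) :
    ∃ u ∈ uIcc a b, ζ u = L ∧ snakeMinOn ζ a u = L := by
  obtain ⟨t, ht, htL : snakeMinOn ζ t a = L⟩ : L ∈ (fun x => snakeMinOn ζ x a) '' uIcc a b :=
    intermediate_value_uIcc (continuousOn_snakeMinOn_left hζ left_mem_uIcc)
      (by rw [snakeMinOn_self, snakeMinOn_comm]; exact mem_uIcc_of_ge hL hLa)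
  have hta : uIcc a t ⊆ uIcc a b := uIcc_subset_uIcc_left ht
  obtain ⟨u, hu, huL⟩ := exists_eq_snakeMinOn (hζ.mono hta)
  rw [snakeMinOn_comm] at htL
  refine ⟨u, hta hu, huL.trans htL, le_antisymm ?_ ?_⟩
  · exact (snakeMinOn_le (hζ.mono ((uIcc_subset_uIcc_left hu).trans hta)) right_mem_uIcc).trans_eq
      (huL.trans htL)
  · exact htL ▸ snakeMinOn_le_of_subset (hζ.mono hta) (uIcc_subset_uIcc_left hu)

end snakeMinOn

lemma mem_uIcc_of_mem_uIcc_of_mem_uIcc {θ a b u : ℝ} (ha : a ∈ uIcc θ b) (hu : u ∈ uIcc a b) :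
    a ∈ uIcc θ u := by
  simp only [mem_uIcc] at *
  grind

/-- The distance between `s` and `t` in the real tree coded by `ζ`. -/
noncomputable def treeDist (ζ : ℝ → ℝ) (s t : ℝ) : ℝ := ζ t + ζ s - 2 * snakeMinOn ζ t s

section treeDist

variable {ζ : ℝ → ℝ} {θ a b L : ℝ}

lemma treeDist_self : treeDist ζ a a = 0 := by
  rw [treeDist, snakeMinOn_self]
  ring

lemma treeDist_comm : treeDist ζ a b = treeDist ζ b a := by
  rw [treeDist, treeDist, snakeMinOn_comm]
  ring

lemma treeDist_nonneg (hζ : ContinuousOn ζ (uIcc b a)) : 0 ≤ treeDist ζ a b := by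
  have ha := snakeMinOn_le hζ right_mem_uIcc
  have hb := snakeMinOn_le hζ left_mem_uIcc
  rw [treeDist]
  linarith

lemma treeDist_eq_of_eq_zero (hζ : ContinuousOn ζ (uIcc b a)) (hnn : ∀ u ∈ uIcc b a, 0 ≤ ζ u)
    (hb : ζ b = 0) : treeDist ζ a b = ζ a := by
  have hmin : snakeMinOn ζ b a = 0 :=
    le_antisymm (hb ▸ snakeMinOn_le hζ left_mem_uIcc) (le_snakeMinOn hnn)
  rw [treeDist, hb, hmin]
  ring

lemma treeDist_zero_eq_treeDist_one (hζ : ContinuousOn ζ (Icc 0 1))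
    (hnn : ∀ u ∈ Icc (0 : ℝ) 1, 0 ≤ ζ u) (hζ0 : ζ 0 = 0) (hζ1 : ζ 1 = 0) (hθ : θ ∈ Icc (0 : ℝ) 1) :
    treeDist ζ θ 0 = treeDist ζ θ 1 := by
  have hroot : ∀ e ∈ Icc (0 : ℝ) 1, ζ e = 0 → treeDist ζ θ e = ζ θ := fun e he hζe =>
    treeDist_eq_of_eq_zero (hζ.mono (uIcc_subset_Icc he hθ))
      (fun u hu => hnn u (uIcc_subset_Icc he hθ hu)) hζe
  rw [hroot 0 (left_mem_Icc.2 zero_le_one) hζ0, hroot 1 (right_mem_Icc.2 zero_le_one) hζ1]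

lemma continuousOn_treeDist (hζ : ContinuousOn ζ (Icc a b)) (hθ : θ ∈ Icc a b) :
    ContinuousOn (treeDist ζ θ) (Icc a b) :=
  (hζ.add continuousOn_const).sub (continuousOn_const.mul (continuousOn_snakeMinOn_left hζ hθ))

lemma MemSnakeSpace.eq_of_treeDist_eq_zero {f : ℝ → ℝ} (h : MemSnakeSpace f ζ)
    (ha : a ∈ Icc 0 1) (hb : b ∈ Icc 0 1) (hab : treeDist ζ a b = 0) : f a = f b := by
  obtain ⟨-, hζ, -, -, -, -, -, hsnake⟩ := h
  have hζab := hζ.mono (uIcc_subset_Icc ha hb)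
  have hma := snakeMinOn_le hζab left_mem_uIcc
  have hmb := snakeMinOn_le hζab right_mem_uIcc
  rw [treeDist, snakeMinOn_comm] at hab
  exact hsnake a ha b hb (by linarith) (by linarith)

lemma exists_treeDist_eq (hζ : ContinuousOn ζ (uIcc θ b)) (ha : a ∈ uIcc θ b)
    (hL : snakeMinOn ζ a b ≤ L) (hLa : L ≤ ζ a) :
    ∃ u ∈ uIcc a b, treeDist ζ θ u = L + ζ θ - 2 * min (snakeMinOn ζ a θ) L := by
  obtain ⟨u, hu, huL, hauL⟩ :=
    exists_mem_uIcc_snakeMinOn_eq (hζ.mono (uIcc_subset_uIcc_right ha)) hL hLa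
  have hθu : uIcc θ u ⊆ uIcc θ b := uIcc_subset_uIcc_left (uIcc_subset_uIcc_right ha hu)
  refine ⟨u, hu, ?_⟩
  rw [treeDist, huL, snakeMinOn_comm,
    snakeMinOn_eq_min (hζ.mono hθu) (mem_uIcc_of_mem_uIcc_of_mem_uIcc ha hu),
    snakeMinOn_comm (x := θ), hauL]

lemma eq_snakeMinOn_of_isMinOn (hζ : ContinuousOn ζ (uIcc θ b)) (ha : a ∈ uIcc θ b)
    (hab : snakeMinOn ζ a b ≤ snakeMinOn ζ a θ) (hmin : IsMinOn (treeDist ζ θ) (uIcc a b) a) :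
    ζ a = snakeMinOn ζ a θ := by
  have hMa : snakeMinOn ζ a θ ≤ ζ a :=
    snakeMinOn_le (hζ.mono (uIcc_comm θ a ▸ uIcc_subset_uIcc_left ha)) left_mem_uIcc
  obtain ⟨u, hu, hdu⟩ := exists_treeDist_eq hζ ha hab hMa
  have : treeDist ζ θ a ≤ treeDist ζ θ u := hmin hu
  rw [hdu, min_self, treeDist] at this
  linarith

lemma treeDist_eq_zero_of_isMinOn (hζ : ContinuousOn ζ (uIcc θ b)) (ha : a ∈ uIcc θ b)
    (heq : treeDist ζ θ a = treeDist ζ θ b) (hmin : IsMinOn (treeDist ζ θ) (uIcc a b) a) :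
    treeDist ζ a b = 0 := by
  have hζab := hζ.mono (uIcc_subset_uIcc_right ha)
  have hma := snakeMinOn_le hζab left_mem_uIcc
  have hmb := snakeMinOn_le hζab right_mem_uIcc
  have hbθ : snakeMinOn ζ b θ = min (snakeMinOn ζ a θ) (snakeMinOn ζ a b) := by
    rw [snakeMinOn_comm, snakeMinOn_eq_min hζ ha, snakeMinOn_comm (x := θ)]
  rw [treeDist, treeDist, hbθ] at heq
  rcases le_or_gt (snakeMinOn ζ a θ) (snakeMinOn ζ a b) with hle | hlt
  · obtain ⟨u, hu, hdu⟩ := exists_treeDist_eq hζ ha le_rfl hma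
    have : treeDist ζ θ a ≤ treeDist ζ θ u := hmin hu
    rw [hdu, min_eq_left hle, treeDist] at this
    rw [min_eq_left hle] at heq
    rw [treeDist, snakeMinOn_comm]
    linarith
  · have hζa := eq_snakeMinOn_of_isMinOn hζ ha hlt.le hmin
    rw [min_eq_right hlt.le] at heq
    linarith

/-- Both `a` and `b` are ancestors of `θ` at the same height, hence the same vertex. -/
lemma treeDist_eq_zero_of_isMinOn_Icc_one_of_isMinOn_Icc_zero (hζ : ContinuousOn ζ (Icc 0 1))
    (hnn : ∀ u ∈ Icc (0 : ℝ) 1, 0 ≤ ζ u) (hζ0 : ζ 0 = 0) (hζ1 : ζ 1 = 0)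
    (hb : b ∈ Icc 0 θ) (ha : a ∈ Icc θ 1) (heq : treeDist ζ θ a = treeDist ζ θ b)
    (hmina : IsMinOn (treeDist ζ θ) (Icc a 1) a) (hminb : IsMinOn (treeDist ζ θ) (Icc 0 b) b) :
    treeDist ζ a b = 0 := by
  have hθ : θ ∈ Icc (0 : ℝ) 1 := ⟨hb.1.trans hb.2, ha.1.trans ha.2⟩
  have hroot : ∀ x ∈ Icc (0 : ℝ) 1, ∀ e ∈ Icc (0 : ℝ) 1, ζ e = 0 →
      snakeMinOn ζ x e ≤ snakeMinOn ζ x θ := fun x hx e he hζe =>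
    (snakeMinOn_le (hζ.mono (uIcc_subset_Icc hx he)) right_mem_uIcc).trans
      (hζe ▸ le_snakeMinOn fun u hu => hnn u (uIcc_subset_Icc hx hθ hu))
  have ha' : a ∈ Icc (0 : ℝ) 1 := ⟨hθ.1.trans ha.1, ha.2⟩
  have hb' : b ∈ Icc (0 : ℝ) 1 := ⟨hb.1, hb.2.trans hθ.2⟩
  have hζa : ζ a = snakeMinOn ζ a θ :=
    eq_snakeMinOn_of_isMinOn (hζ.mono (uIcc_subset_Icc hθ (right_mem_Icc.2 zero_le_one)))
      (mem_uIcc_of_le ha.1 ha.2) (hroot a ha' 1 (right_mem_Icc.2 zero_le_one) hζ1)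
      (by rwa [uIcc_of_le ha.2])
  have hζb : ζ b = snakeMinOn ζ b θ :=
    eq_snakeMinOn_of_isMinOn (hζ.mono (uIcc_subset_Icc hθ (left_mem_Icc.2 zero_le_one)))
      (mem_uIcc_of_ge hb.1 hb.2) (hroot b hb' 0 (left_mem_Icc.2 zero_le_one) hζ0)
      (by rwa [uIcc_of_ge hb.1])
  rw [treeDist, treeDist, ← hζa, ← hζb] at heq
  have hab : ζ a = ζ b := by linarith
  rw [treeDist, snakeMinOn_comm, snakeMinOn_eq_min (hζ.mono (uIcc_subset_Icc ha' hb'))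
    (mem_uIcc_of_ge hb.2 ha.1), snakeMinOn_comm (x := θ), ← hζa, ← hζb, hab, min_self]
  ring

end treeDist

section wrap

variable {a θ : ℝ}

lemma wrap_of_lt (h : a < 1) : wrap a = a := if_pos h

lemma wrap_of_one_le (h : 1 ≤ a) : wrap a = a - 1 := if_neg h.not_gt

lemma apply_wrap_of_le {g : ℝ → ℝ} (hg : g 0 = g 1) (h : a ≤ 1) : g (wrap a) = g a := by
  rcases h.lt_or_eq with h | rfl
  · rw [wrap_of_lt h]
  · rw [wrap_of_one_le le_rfl, sub_self, hg]

lemma wrap_add_mem_Icc {x : ℝ} (hθ : θ ∈ Icc (0 : ℝ) 1) (hx : x ∈ Icc (0 : ℝ) 1) :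
    wrap (θ + x) ∈ Icc (0 : ℝ) 1 := by
  rcases lt_or_ge (θ + x) 1 with h | h
  · rw [wrap_of_lt h]
    exact ⟨add_nonneg hθ.1 hx.1, h.le⟩
  · rw [wrap_of_one_le h]
    constructor <;> linarith [hθ.2, hx.2]

lemma ContinuousOn.comp_wrap_add {g : ℝ → ℝ} (hg : ContinuousOn g (Icc 0 1)) (hg01 : g 0 = g 1)
    (hθ : θ ∈ Icc (0 : ℝ) 1) : ContinuousOn (fun x => g (wrap (θ + x))) (Icc 0 1) := by
  rw [← Icc_union_Icc_eq_Icc (sub_nonneg.2 hθ.2) (sub_le_self 1 hθ.1)]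
  refine ContinuousOn.union_of_isClosed ?_ ?_ isClosed_Icc isClosed_Icc
  · refine (hg.comp (f := fun x => θ + x) (by fun_prop) fun x hx => ?_).congr fun x hx =>
      apply_wrap_of_le hg01 (by linarith [hx.2])
    exact ⟨by linarith [hθ.1, hx.1], by linarith [hx.2]⟩
  · refine (hg.comp (f := fun x => θ + x - 1) (by fun_prop) fun x hx => ?_).congr fun x hx =>
      congrArg g (wrap_of_one_le (by linarith [hx.1]))
    exact ⟨by linarith [hx.1], by linarith [hθ.2, hx.2]⟩

end wrap

section reroot

variable {ζ : ℝ → ℝ} {θ s s' : ℝ}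

lemma rerootZ_eq_treeDist (x : ℝ) : rerootZ ζ θ x = treeDist ζ θ (wrap (θ + x)) := rfl

lemma treeDist_wrap_eq_zero (hζ : ContinuousOn ζ (Icc 0 1)) (hnn : ∀ u ∈ Icc (0 : ℝ) 1, 0 ≤ ζ u)
    (hζ0 : ζ 0 = 0) (hζ1 : ζ 1 = 0) (hθ : θ ∈ Icc (0 : ℝ) 1) (hs : s ∈ Icc (0 : ℝ) 1)
    (hs' : s' ∈ Icc (0 : ℝ) 1) (heq : rerootZ ζ θ s = rerootZ ζ θ s')
    (hmin : IsMinOn (rerootZ ζ θ) (uIcc s s') s) :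
    treeDist ζ (wrap (θ + s)) (wrap (θ + s')) = 0 := by
  wlog hss : s ≤ s' generalizing s s'
  · rw [treeDist_comm]
    exact this hs' hs heq.symm (fun y hy => heq ▸ hmin (uIcc_comm s s' ▸ hy)) (le_of_not_ge hss)
  rw [uIcc_of_le hss] at hmin
  have hd01 := treeDist_zero_eq_treeDist_one hζ hnn hζ0 hζ1 hθ
  have hZ₁ : ∀ x, θ + x ≤ 1 → rerootZ ζ θ x = treeDist ζ θ (θ + x) := fun x hx => by
    rw [rerootZ_eq_treeDist, apply_wrap_of_le hd01 hx]
  have hZ₂ : ∀ x, 1 ≤ θ + x → rerootZ ζ θ x = treeDist ζ θ (θ + x - 1) := fun x hx => by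
    rw [rerootZ_eq_treeDist, wrap_of_one_le hx]
  rcases lt_or_ge (θ + s') 1 with hs'1 | hs'1
  · rw [wrap_of_lt (by linarith), wrap_of_lt hs'1]
    refine treeDist_eq_zero_of_isMinOn
      (hζ.mono (uIcc_subset_Icc hθ ⟨by linarith [hθ.1, hs'.1], hs'1.le⟩))
      (mem_uIcc_of_le (by linarith [hs.1]) (by linarith)) ?_ (isMinOn_iff.2 fun t ht => ?_)
    · rwa [← hZ₁ _ (by linarith), ← hZ₁ _ hs'1.le]
    · rw [uIcc_of_le (by linarith)] at ht
      have : rerootZ ζ θ s ≤ rerootZ ζ θ (t - θ) := hmin ⟨by linarith [ht.1], by linarith [ht.2]⟩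
      rwa [hZ₁ _ (by linarith), hZ₁ _ (by linarith [ht.2]), add_sub_cancel] at this
  rcases lt_or_ge (θ + s) 1 with hs1 | hs1
  · rw [wrap_of_lt hs1, wrap_of_one_le hs'1]
    refine treeDist_eq_zero_of_isMinOn_Icc_one_of_isMinOn_Icc_zero hζ hnn hζ0 hζ1
      ⟨by linarith, by linarith [hs'.2]⟩ ⟨by linarith [hs.1], hs1.le⟩
      (by rwa [← hZ₁ _ hs1.le, ← hZ₂ _ hs'1]) (isMinOn_iff.2 fun t ht => ?_)
      (isMinOn_iff.2 fun t ht => ?_)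
    · have : rerootZ ζ θ s ≤ rerootZ ζ θ (t - θ) := hmin ⟨by linarith [ht.1], by linarith [ht.2]⟩
      rwa [hZ₁ _ hs1.le, hZ₁ _ (by linarith [ht.2]), add_sub_cancel] at this
    · have : rerootZ ζ θ s' ≤ rerootZ ζ θ (t + 1 - θ) :=
        heq ▸ hmin ⟨by linarith [ht.1], by linarith [ht.2]⟩
      rwa [hZ₂ _ hs'1, hZ₂ _ (by linarith [ht.1]), add_sub_cancel, add_sub_cancel_right] at this
  · rw [wrap_of_one_le hs1, wrap_of_one_le hs'1, treeDist_comm]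
    refine treeDist_eq_zero_of_isMinOn
      (hζ.mono (uIcc_subset_Icc hθ ⟨by linarith, by linarith [hθ.2, hs.2]⟩))
      (mem_uIcc_of_ge (by linarith) (by linarith [hs'.2]))
      (by rw [← hZ₂ _ hs1, ← hZ₂ _ hs'1, heq])
      (isMinOn_iff.2 fun t ht => ?_)
    rw [uIcc_of_ge (by linarith)] at ht
    have : rerootZ ζ θ s' ≤ rerootZ ζ θ (t + 1 - θ) :=
      heq ▸ hmin ⟨by linarith [ht.1], by linarith [ht.2]⟩
    rwa [hZ₂ _ hs'1, hZ₂ _ (by linarith [ht.1]), add_sub_cancel, add_sub_cancel_right] at this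

end reroot

/-- The rerooting operator `J^(θ)` maps `𝕋` to `𝕋`: if `(f,ζ) ∈ 𝕋` and `θ ∈ [0,1)`, then
`(f^[θ], ζ^(θ)) ∈ 𝕋`. -/
theorem reroot_mem_snakeSpace (f ζ : ℝ → ℝ) (θ : ℝ)
    (hθ : θ ∈ Set.Ico (0:ℝ) 1) (h : MemSnakeSpace f ζ) :
    MemSnakeSpace (rerootF f θ) (rerootZ ζ θ) := by
  have ⟨hf, hζ, hζ0, hζ1, hnn, hf0, hf1, _⟩ := h
  have hθ' : θ ∈ Icc (0 : ℝ) 1 := Ico_subset_Icc_self hθ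
  have hZ : ContinuousOn (rerootZ ζ θ) (Icc 0 1) :=
    (continuousOn_treeDist hζ hθ').comp_wrap_add
      (treeDist_zero_eq_treeDist_one hζ hnn hζ0 hζ1 hθ') hθ'
  refine ⟨(hf.comp_wrap_add (hf0.trans hf1.symm) hθ').sub continuousOn_const, hZ, ?_, ?_,
    fun x hx => ?_, ?_, ?_, fun s hs s' hs' heq hmin => ?_⟩
  · rw [rerootZ_eq_treeDist, add_zero, wrap_of_lt hθ.2, treeDist_self]
  · rw [rerootZ_eq_treeDist, wrap_of_one_le (le_add_of_nonneg_left hθ.1), add_sub_cancel_right,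
      treeDist_self]
  · exact treeDist_nonneg (hζ.mono (uIcc_subset_Icc (wrap_add_mem_Icc hθ' hx) hθ'))
  · rw [rerootF, add_zero, wrap_of_lt hθ.2, sub_self]
  · rw [rerootF, wrap_of_one_le (le_add_of_nonneg_left hθ.1), add_sub_cancel_right, sub_self]
  · have hZmin : IsMinOn (rerootZ ζ θ) (uIcc s s') s := isMinOn_iff.2 fun y hy =>
      hmin ▸ snakeMinOn_le (hZ.mono (uIcc_subset_Icc hs hs')) hy
    exact congrArg (· - f θ) (h.eq_of_treeDist_eq_zero (wrap_add_mem_Icc hθ' hs)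
      (wrap_add_mem_Icc hθ' hs') (treeDist_wrap_eq_zero hζ hnn hζ0 hζ1 hθ' hs hs' heq hZmin))
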